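/- arXiv:math/0701361 — 4 statements merged into one kernel-verified Lean document; each statement's English description precedes it below -/
import Mathlib

section
/- If Γ is a finitely generated group and H ≤ K ≤ Γ are subgroups of finite index, then (d(H) - 1)/[Γ : H] ≤ (d(K) - 1)/[Γ : K]. -/
open Subgroup
open scoped Pointwise

section Aux

variable {G : Type*} [Group G]

/-- A partial right transversal `R` is *full* if it hits every right coset of `H`. -/
def AuxFull (H : Subgroup G) (R : Finset G) : Prop := ∀ g : G, ∃ r ∈ R, g * r⁻¹ ∈ H

/-- The elements of `R` lie in pairwise distinct right cosets. -/
def AuxDist (H : Subgroup G) (R : Finset G) : Prop :=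
  ∀ r ∈ R, ∀ r' ∈ R, r * r'⁻¹ ∈ H → r = r'

lemma aux_injOn (H : Subgroup G) {R : Finset G} (hd : AuxDist H R) :
    Set.InjOn (fun r : G => (QuotientGroup.mk r⁻¹ : G ⧸ H)) R := by
  intro x hx y hy hxy
  apply hd x hx y hy
  have := QuotientGroup.eq.mp hxy
  simpa using this

lemma aux_full_of_card {H : Subgroup G} [H.FiniteIndex] {R : Finset G} (hd : AuxDist H R)
    (hcard : H.index ≤ R.card) : AuxFull H R := by
  classical
  letI := H.fintypeQuotientOfFiniteIndex
  intro g
  have himg : (R.image fun r : G => (QuotientGroup.mk r⁻¹ : G ⧸ H)) = Finset.univ := by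
    apply Finset.eq_univ_of_card
    rw [Finset.card_image_of_injOn (aux_injOn H hd)]
    refine le_antisymm ?_ ?_
    · rw [← Finset.card_univ]
      exact Finset.card_le_card_of_injOn _ (fun a _ => Finset.mem_univ _) (aux_injOn H hd)
    · calc Fintype.card (G ⧸ H) = H.index := by rw [index_eq_card, Nat.card_eq_fintype_card]
        _ ≤ R.card := hcard
  have : (QuotientGroup.mk g⁻¹ : G ⧸ H) ∈
      R.image fun r : G => (QuotientGroup.mk r⁻¹ : G ⧸ H) := by
    rw [himg]; exact Finset.mem_univ _
  obtain ⟨r, hr, heq⟩ := Finset.mem_image.mp this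
  refine ⟨r, hr, ?_⟩
  have h2 := QuotientGroup.eq.mp heq
  have h3 : r * g⁻¹ ∈ H := by simpa using h2
  simpa using H.inv_mem h3

lemma aux_card_eq_index {H : Subgroup G} [H.FiniteIndex] {R : Finset G} (hd : AuxDist H R)
    (hf : AuxFull H R) : R.card = H.index := by
  classical
  letI := H.fintypeQuotientOfFiniteIndex
  have hle : R.card ≤ H.index := by
    rw [index_eq_card, Nat.card_eq_fintype_card, ← Finset.card_univ]
    exact Finset.card_le_card_of_injOn _ (fun a _ => Finset.mem_univ _) (aux_injOn H hd)
  have hge : H.index ≤ R.card := by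
    rw [index_eq_card, Nat.card_eq_fintype_card, ← Finset.card_univ]
    apply Finset.card_le_card_of_surjOn (fun r : G => (QuotientGroup.mk r⁻¹ : G ⧸ H))
    intro q _
    obtain ⟨x, rfl⟩ := QuotientGroup.mk_surjective q
    obtain ⟨r, hr, hxr⟩ := hf x⁻¹
    refine ⟨r, hr, ?_⟩
    rw [QuotientGroup.eq]
    simpa using H.inv_mem hxr
  omega

lemma aux_exists_new {H : Subgroup G} {S : Finset G} (hS : closure (S : Set G) = ⊤)
    {R : Finset G} (h1 : (1 : G) ∈ R) (hnf : ¬ AuxFull H R) :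
    ∃ r ∈ R, ∃ s : G, (s ∈ S ∨ s⁻¹ ∈ S) ∧ ∀ r' ∈ R, (r * s) * r'⁻¹ ∉ H := by
  by_contra hcon
  push_neg at hcon
  apply hnf
  intro g
  have hg : g ∈ closure (S : Set G) := by rw [hS]; trivial
  induction hg using closure_induction_right with
  | one => exact ⟨1, h1, by simpa using H.one_mem⟩
  | mul_right x hx s hs ih =>
    obtain ⟨r, hr, hxr⟩ := ih
    obtain ⟨r', hr', hrs⟩ := hcon r hr s (Or.inl hs)
    refine ⟨r', hr', ?_⟩
    have heq : (x * s) * r'⁻¹ = (x * r⁻¹) * ((r * s) * r'⁻¹) := by group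
    rw [heq]; exact H.mul_mem hxr hrs
  | mul_inv_cancel x hx s hs ih =>
    obtain ⟨r, hr, hxr⟩ := ih
    obtain ⟨r', hr', hrs⟩ := hcon r hr s⁻¹ (Or.inr (by simpa using hs))
    refine ⟨r', hr', ?_⟩
    have heq : (x * s⁻¹) * r'⁻¹ = (x * r⁻¹) * ((r * s⁻¹) * r'⁻¹) := by group
    rw [heq]; exact H.mul_mem hxr hrs

end Aux

section Main

variable {G : Type*} [Group G]

lemma aux_exists_data (H : Subgroup G) [H.FiniteIndex] {S : Finset G}
    (hS : closure (S : Set G) = ⊤) :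
    ∃ (R : Finset G) (P : Finset (G × G)), (1 : G) ∈ R ∧ AuxDist H R ∧ AuxFull H R ∧
      (∀ p ∈ P, p.1 ∈ R ∧ p.2 ∈ S ∧ p.1 * p.2 ∈ R) ∧ R.card = P.card + 1 := by
  classical
  suffices key : ∀ m : ℕ, ∀ R : Finset G, ∀ P : Finset (G × G), (1 : G) ∈ R → AuxDist H R →
      (∀ p ∈ P, p.1 ∈ R ∧ p.2 ∈ S ∧ p.1 * p.2 ∈ R) → R.card = P.card + 1 →
      H.index ≤ R.card + m →
      ∃ (R' : Finset G) (P' : Finset (G × G)), (1 : G) ∈ R' ∧ AuxDist H R' ∧ AuxFull H R' ∧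
        (∀ p ∈ P', p.1 ∈ R' ∧ p.2 ∈ S ∧ p.1 * p.2 ∈ R') ∧ R'.card = P'.card + 1 by
    refine key H.index {1} ∅ (Finset.mem_singleton_self 1) ?_ (by simp) (by simp) (by simp)
    intro r hr r' hr' _
    simp only [Finset.mem_singleton] at hr hr'
    rw [hr, hr']
  intro m
  induction m with
  | zero =>
    intro R P h1 hd hp hc hle
    exact ⟨R, P, h1, hd, aux_full_of_card hd (by simpa using hle), hp, hc⟩
  | succ m ih =>
    intro R P h1 hd hp hc hle
    by_cases hf : AuxFull H R
    · exact ⟨R, P, h1, hd, hf, hp, hc⟩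
    obtain ⟨r, hr, s, hs, hnew⟩ := aux_exists_new hS h1 hf
    have hcR : r * s ∉ R := fun hmem => hnew _ hmem (by rw [mul_inv_cancel]; exact H.one_mem)
    have hd' : AuxDist H (insert (r * s) R) := by
      intro x hx y hy hxy
      rcases Finset.mem_insert.mp hx with rfl | hx
      · rcases Finset.mem_insert.mp hy with rfl | hy
        · rfl
        · exact absurd hxy (hnew y hy)
      · rcases Finset.mem_insert.mp hy with rfl | hy
        · exact absurd (by simpa using H.inv_mem hxy) (hnew x hx)
        · exact hd x hx y hy hxy
    rcases hs with hs | hs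
    · -- forward step: new pair (r, s)
      refine ih (insert (r * s) R) (insert (r, s) P) (Finset.mem_insert_of_mem h1) hd' ?_ ?_ ?_
      · intro p hp'
        rcases Finset.mem_insert.mp hp' with rfl | hp'
        · exact ⟨Finset.mem_insert_of_mem hr, hs, Finset.mem_insert_self _ _⟩
        · obtain ⟨ha, hb, hcc⟩ := hp p hp'
          exact ⟨Finset.mem_insert_of_mem ha, hb, Finset.mem_insert_of_mem hcc⟩
      · have hps : (r, s) ∉ P := fun h => hcR (hp _ h).2.2
        rw [Finset.card_insert_of_notMem hcR, Finset.card_insert_of_notMem hps, hc]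
      · rw [Finset.card_insert_of_notMem hcR]; omega
    · -- backward step: new pair (r * s, s⁻¹)
      refine ih (insert (r * s) R) (insert (r * s, s⁻¹) P) (Finset.mem_insert_of_mem h1) hd' ?_ ?_ ?_
      · intro p hp'
        rcases Finset.mem_insert.mp hp' with rfl | hp'
        · refine ⟨Finset.mem_insert_self _ _, hs, ?_⟩
          have : r * s * s⁻¹ = r := by group
          rw [this]
          exact Finset.mem_insert_of_mem hr
        · obtain ⟨ha, hb, hcc⟩ := hp p hp'
          exact ⟨Finset.mem_insert_of_mem ha, hb, Finset.mem_insert_of_mem hcc⟩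
      · have hps : (r * s, s⁻¹) ∉ P := fun h => hcR (hp _ h).1
        rw [Finset.card_insert_of_notMem hcR, Finset.card_insert_of_notMem hps, hc]
      · rw [Finset.card_insert_of_notMem hcR]; omega

end Main

theorem aux_sharp {G : Type*} [Group G] (H : Subgroup G) [H.FiniteIndex] {S : Finset G}
    (hS : closure (S : Set G) = ⊤) :
    ∃ T : Finset H, T.card + H.index ≤ H.index * S.card + 1 ∧
      closure (T : Set H) = ⊤ := by
  classical
  obtain ⟨R, P, h1, hd, hf, hp, hc⟩ := aux_exists_data H hS
  have hR : IsComplement (H : Set G) (R : Set G) := by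
    rw [isComplement_iff_existsUnique_mul_inv_mem]
    intro g
    obtain ⟨r, hr, hgr⟩ := hf g
    refine ⟨⟨r, Finset.mem_coe.mpr hr⟩, hgr, ?_⟩
    rintro ⟨y, hy⟩ hgy
    have hy' : y ∈ R := Finset.mem_coe.mp hy
    have hyr : y * r⁻¹ ∈ H := by
      have heq : y * r⁻¹ = (g * y⁻¹)⁻¹ * (g * r⁻¹) := by group
      rw [heq]; exact H.mul_mem (H.inv_mem hgy) hgr
    exact Subtype.ext (hd y hy' r hr hyr)
  have rcard : R.card = H.index := aux_card_eq_index hd hf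
  have hT := closure_mul_image_eq_top' (H := H) hR h1 hS
  set T : Finset H := (R * S).image
    (fun g => (⟨g * ((hR.toRightFun g : G))⁻¹, hR.mul_inv_toRightFun_mem g⟩ : H)) with hTdef
  set T₀ : Finset H := ((R ×ˢ S).filter fun p => p.1 * p.2 ∉ R).image
    (fun p => (⟨(p.1 * p.2) * ((hR.toRightFun (p.1 * p.2) : G))⁻¹,
      hR.mul_inv_toRightFun_mem (p.1 * p.2)⟩ : H)) with hT₀def
  have hone : ∀ g : G, g ∈ R →
      (⟨g * ((hR.toRightFun g : G))⁻¹, hR.mul_inv_toRightFun_mem g⟩ : H) = 1 := by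
    intro g hg
    have htf : hR.toRightFun g = ⟨g, Finset.mem_coe.mpr hg⟩ := by
      apply (isComplement_iff_existsUnique_mul_inv_mem.mp hR g).unique
        (hR.mul_inv_toRightFun_mem g)
      rw [mul_inv_cancel]; exact H.one_mem
    apply Subtype.ext
    show g * ((hR.toRightFun g : G))⁻¹ = (1 : G)
    rw [htf]
    simp
  have hsub : closure (T : Set H) ≤ closure ((T₀ : Set H)) := by
    rw [closure_le]
    intro t ht
    obtain ⟨g, hg, rfl⟩ := Finset.mem_image.mp (Finset.mem_coe.mp ht)
    obtain ⟨a, ha, b, hb, rfl⟩ := Finset.mem_mul.mp hg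
    by_cases hab : a * b ∈ R
    · rw [hone _ hab]
      exact Subgroup.one_mem _
    · apply Subgroup.subset_closure
      refine Finset.mem_coe.mpr (Finset.mem_image.mpr ⟨(a, b), ?_, rfl⟩)
      exact Finset.mem_filter.mpr ⟨Finset.mem_product.mpr ⟨ha, hb⟩, hab⟩
  have hT₀top : closure ((T₀ : Set H)) = ⊤ := top_unique (hT ▸ hsub)
  refine ⟨T₀, ?_, hT₀top⟩
  have h1c : T₀.card ≤ ((R ×ˢ S).filter fun p => p.1 * p.2 ∉ R).card := Finset.card_image_le
  have h2c : (((R ×ˢ S).filter fun p => p.1 * p.2 ∈ R).card +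
      ((R ×ˢ S).filter fun p => p.1 * p.2 ∉ R).card) = R.card * S.card := by
    rw [Finset.card_filter_add_card_filter_not, Finset.card_product]
  have h3c : P.card ≤ ((R ×ˢ S).filter fun p => p.1 * p.2 ∈ R).card := by
    apply Finset.card_le_card
    intro p hp'
    obtain ⟨ha, hb, hcc⟩ := hp p hp'
    exact Finset.mem_filter.mpr ⟨Finset.mem_product.mpr ⟨ha, hb⟩, hcc⟩
  have key2 : T₀.card + R.card ≤ (((R ×ˢ S).filter fun p => p.1 * p.2 ∈ R).card +
      ((R ×ˢ S).filter fun p => p.1 * p.2 ∉ R).card) + 1 := by omega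
  rw [h2c, rcard] at key2
  exact key2

/-- The minimal number of generators of a group. -/
noncomputable def numGen (G : Type*) [Group G] : ℕ :=
  sInf {n | ∃ S : Finset G, S.card = n ∧ Subgroup.closure (S : Set G) = ⊤}

lemma numGen_le {G : Type*} [Group G] {S : Finset G}
    (h : Subgroup.closure (S : Set G) = ⊤) : numGen G ≤ S.card :=
  Nat.sInf_le ⟨S, rfl, h⟩

lemma numGen_spec (G : Type*) [Group G] [h : Group.FG G] :
    ∃ S : Finset G, S.card = numGen G ∧ Subgroup.closure (S : Set G) = ⊤ := by
  have hne : {n | ∃ S : Finset G, S.card = n ∧ Subgroup.closure (S : Set G) = ⊤}.Nonempty := by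
    obtain ⟨S, hS⟩ := h.1
    exact ⟨S.card, S, rfl, hS⟩
  exact Nat.sInf_mem hne

/-- If `Γ` is a finitely generated group and `H ≤ K ≤ Γ` are subgroups
of finite index, then `(d(H) - 1)/[Γ : H] ≤ (d(K) - 1)/[Γ : K]`. -/
theorem rank_gradient_monotone {Γ : Type*} [Group Γ] [Group.FG Γ]
    (H K : Subgroup Γ) (hHK : H ≤ K) (hH : H.FiniteIndex) (hK : K.FiniteIndex) :
    ((numGen H : ℚ) - 1) / (H.index : ℚ) ≤ ((numGen K : ℚ) - 1) / (K.index : ℚ) := by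
  classical
  haveI := hH
  haveI := hK
  haveI : Group.FG K := inferInstance
  have hrel : H.relIndex K * K.index = H.index := Subgroup.relIndex_mul_index hHK
  have hreln0 : H.relIndex K ≠ 0 := by
    intro h0
    exact hH.index_ne_zero (by rw [← hrel, h0, zero_mul])
  haveI : (H.subgroupOf K).FiniteIndex := ⟨hreln0⟩
  obtain ⟨S, hScard, hSgen⟩ := numGen_spec K
  obtain ⟨T, hTcard, hTgen⟩ := aux_sharp (H.subgroupOf K) hSgen
  -- transport generators along the iso `H.subgroupOf K ≃* H`
  have hHle : numGen H ≤ T.card := by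
    set e := Subgroup.subgroupOfEquivOfLe hHK
    have hclos : Subgroup.closure ((T.image e : Finset H) : Set H) = ⊤ := by
      rw [Finset.coe_image]
      have h2 : Subgroup.closure (⇑e.toMonoidHom '' (T : Set (H.subgroupOf K))) = ⊤ := by
        rw [← MonoidHom.map_closure, hTgen]
        exact Subgroup.map_top_of_surjective _ e.surjective
      exact h2
    exact le_trans (numGen_le hclos) Finset.card_image_le
  have hmain : (numGen H : ℚ) + (H.relIndex K : ℚ) ≤ (H.relIndex K : ℚ) * numGen K + 1 := by
    have hnat : numGen H + H.relIndex K ≤ H.relIndex K * numGen K + 1 := by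
      have h2 : numGen H + (H.subgroupOf K).index ≤ (H.subgroupOf K).index * S.card + 1 :=
        le_trans (Nat.add_le_add_right hHle _) hTcard
      rw [hScard] at h2
      exact h2
    exact_mod_cast hnat
  have hKpos : (0 : ℚ) < (K.index : ℚ) :=
    Nat.cast_pos.mpr (Nat.pos_of_ne_zero hK.index_ne_zero)
  have hnpos : (0 : ℚ) < (H.relIndex K : ℚ) :=
    Nat.cast_pos.mpr (Nat.pos_of_ne_zero hreln0)
  rw [← hrel]
  push_cast
  rw [div_le_div_iff₀ (by positivity) hKpos]
  nlinarith [mul_le_mul_of_nonneg_right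
    (show (numGen H : ℚ) - 1 ≤ (H.relIndex K : ℚ) * numGen K - H.relIndex K by linarith)
    (le_of_lt hKpos)]
end

section
/- Let Γ = ⟨A, t | aᵗ = f(a) for all a ∈ A⟩ be an ascending HNN extension of a finitely generated group A along an injective endomorphism f : A → A. For each n ≥ 1, the subgroup Γₙ = ⟨A, tⁿ⟩ is a normal subgroup of Γ of index n, and d(Γₙ) ≤ d(A) + 1. -/
open Subgroup HNNExtension

section Aux
variable {A : Type*} [Group A] (f : A →* A)
  (φ : (⊤ : Subgroup A) ≃* f.range) (hφ : ∀ a : (⊤ : Subgroup A), (φ a : A) = f a)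

local notation "Γ" => HNNExtension A ⊤ f.range φ

lemma myT_mul_of (hφ : ∀ a : (⊤ : Subgroup A), (φ a : A) = f a) (a : A) : (t : Γ) * of a = of (f a) * t := by
  have := t_mul_of (φ := φ) ⟨a, trivial⟩
  rw [show ((φ ⟨a, trivial⟩ : f.range) : A) = f a from hφ _] at this
  exact this

lemma myTpow_mul_of (hφ : ∀ a : (⊤ : Subgroup A), (φ a : A) = f a) (k : ℕ) (a : A) : (t : Γ) ^ k * of a = of (f^[k] a) * t ^ k := by
  induction k with
  | zero => simp
  | succ k ih =>
    rw [pow_succ', mul_assoc, ih, ← mul_assoc, myT_mul_of f φ hφ,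
      Function.iterate_succ_apply', mul_assoc, ← pow_succ']

lemma myTopGen :
    Subgroup.closure (Set.range (of : A →* Γ) ∪ {(t : Γ)}) = ⊤ := by
  rw [eq_top_iff]
  intro x _
  induction x using HNNExtension.induction_on with
  | of g => exact subset_closure (Or.inl ⟨g, rfl⟩)
  | t => exact subset_closure (Or.inr rfl)
  | mul x y hx hy => exact mul_mem (hx trivial) (hy trivial)
  | inv x hx => exact inv_mem (hx trivial)

lemma conj_closure_le {G : Type*} [Group G] {s : Set G} {g : G}
    (h : ∀ x ∈ s, g * x * g⁻¹ ∈ Subgroup.closure s) :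
    ∀ x ∈ Subgroup.closure s, g * x * g⁻¹ ∈ Subgroup.closure s := by
  intro x hx
  refine Subgroup.closure_induction (p := fun x _ => g * x * g⁻¹ ∈ Subgroup.closure s)
    h (by simpa using one_mem _) ?_ ?_ hx
  · intro x y _ _ hx hy
    have : g * (x * y) * g⁻¹ = (g * x * g⁻¹) * (g * y * g⁻¹) := by group
    rw [this]; exact mul_mem hx hy
  · intro x _ hx
    have : g * x⁻¹ * g⁻¹ = (g * x * g⁻¹)⁻¹ := by group
    rw [this]; exact inv_mem hx

end Aux



/-- Let `Γ = ⟨A, t | aᵗ = f(a)⟩` be the ascending HNN extension of a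
finitely generated group `A` along an injective endomorphism `f : A → A`.  For each
`n ≥ 1` the subgroup `Γₙ = ⟨A, tⁿ⟩` is normal of index `n` in `Γ`, and
`d(Γₙ) ≤ d(A) + 1`. -/
theorem ascending_hnn_subgroups {A : Type*} [Group A] [Group.FG A]
    (f : A →* A) (hf : Function.Injective f)
    (φ : (⊤ : Subgroup A) ≃* f.range) (hφ : ∀ a : (⊤ : Subgroup A), (φ a : A) = f a)
    (n : ℕ) (hn : 1 ≤ n)
    (Γn : Subgroup (HNNExtension A ⊤ f.range φ))
    (hΓn : Γn = Subgroup.closure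
      (Set.range (HNNExtension.of : A →* HNNExtension A ⊤ f.range φ) ∪
        {(HNNExtension.t : HNNExtension A ⊤ f.range φ) ^ n})) :
    Γn.Normal ∧ Γn.index = n ∧ numGen Γn ≤ numGen A + 1 := by
  set gens : Set (HNNExtension A ⊤ f.range φ) :=
    Set.range (HNNExtension.of : A →* HNNExtension A ⊤ f.range φ) ∪
      {(HNNExtension.t : HNNExtension A ⊤ f.range φ) ^ n} with hgens
  have h_of : ∀ a : A, (of a : HNNExtension A ⊤ f.range φ) ∈ Γn := fun a =>
    hΓn ▸ subset_closure (Or.inl ⟨a, rfl⟩)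
  have h_tn : (t : HNNExtension A ⊤ f.range φ) ^ n ∈ Γn :=
    hΓn ▸ subset_closure (Or.inr rfl)
  -- conjugation stability
  have key : ∀ g : HNNExtension A ⊤ f.range φ, (∀ x ∈ gens, g * x * g⁻¹ ∈ Γn) →
      ∀ x ∈ Γn, g * x * g⁻¹ ∈ Γn := by
    intro g h x hx
    rw [hΓn] at hx ⊢
    exact conj_closure_le (by simpa [hΓn] using h) x hx
  have conj_of : ∀ (a : A), ∀ x ∈ gens, of a * x * (of a)⁻¹ ∈ Γn := by
    rintro a x (⟨b, rfl⟩ | rfl)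
    · rw [← map_inv, ← map_mul, ← map_mul]; exact h_of _
    · have h1 : (t : HNNExtension A ⊤ f.range φ) ^ n * (of a)⁻¹ = of (f^[n] a⁻¹) * t ^ n := by
        rw [← map_inv]; exact myTpow_mul_of f φ hφ n a⁻¹
      have : of a * (t : HNNExtension A ⊤ f.range φ) ^ n * (of a)⁻¹
          = of a * of (f^[n] a⁻¹) * t ^ n := by
        rw [mul_assoc, h1, ← mul_assoc]
      rw [this]
      exact mul_mem (mul_mem (h_of _) (h_of _)) h_tn
  have conj_t : ∀ x ∈ gens, t * x * t⁻¹ ∈ Γn := by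
    rintro x (⟨b, rfl⟩ | rfl)
    · have : (t : HNNExtension A ⊤ f.range φ) * of b * t⁻¹ = of (f b) := by
        rw [myT_mul_of f φ hφ]; group
      rw [this]; exact h_of _
    · have : (t : HNNExtension A ⊤ f.range φ) * t ^ n * t⁻¹ = t ^ n := by group
      rw [this]; exact h_tn
  have conj_tinv : ∀ x ∈ gens, t⁻¹ * x * t⁻¹⁻¹ ∈ Γn := by
    rintro x (⟨b, rfl⟩ | rfl)
    · obtain ⟨m, rfl⟩ : ∃ m, n = m + 1 := ⟨n - 1, by omega⟩
      have e := myTpow_mul_of f φ hφ m b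
      have : (t : HNNExtension A ⊤ f.range φ)⁻¹ * of b * t⁻¹⁻¹
          = (t ^ (m + 1))⁻¹ * of (f^[m] b) * t ^ (m + 1) := by
        rw [inv_inv]
        calc (t : HNNExtension A ⊤ f.range φ)⁻¹ * of b * t
            = (t ^ m * t)⁻¹ * (t ^ m * of b) * t := by group
          _ = (t ^ m * t)⁻¹ * (of (f^[m] b) * t ^ m) * t := by rw [e]
          _ = (t ^ (m + 1))⁻¹ * of (f^[m] b) * t ^ (m + 1) := by group
      rw [this]
      exact mul_mem (mul_mem (inv_mem h_tn) (h_of _)) h_tn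
    · have : (t : HNNExtension A ⊤ f.range φ)⁻¹ * t ^ n * t⁻¹⁻¹ = t ^ n := by group
      rw [this]; exact h_tn
  have hnorm : Γn.Normal := by
    rw [← Subgroup.normalizer_eq_top_iff, eq_top_iff, ← myTopGen f φ]
    refine (Subgroup.closure_le _).2 ?_
    rintro g (⟨a, rfl⟩ | rfl) <;> rw [SetLike.mem_coe, Subgroup.mem_normalizer_iff] <;>
        intro h <;> constructor
    · exact fun hh => key _ (conj_of a) h hh
    · intro hh
      have h2 : ∀ x ∈ gens, (of a)⁻¹ * x * ((of a)⁻¹)⁻¹ ∈ Γn := by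
        intro x hx
        have := conj_of a⁻¹ x hx
        simpa [map_inv] using this
      have := key _ h2 _ hh
      simpa [mul_assoc] using this
    · exact fun hh => key _ conj_t h hh
    · intro hh
      have := key _ conj_tinv _ hh
      simpa [mul_assoc] using this
  haveI := hnorm
  -- index
  let π := QuotientGroup.mk' Γn
  have hπt : π t ^ n = 1 := by
    rw [← map_pow]
    exact (QuotientGroup.eq_one_iff _).2 h_tn
  have hzp : Subgroup.zpowers (π t) = ⊤ := by
    rw [eq_top_iff]
    have hmap : Subgroup.map π ⊤ = ⊤ :=
      Subgroup.map_top_of_surjective π (QuotientGroup.mk'_surjective Γn)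
    rw [← hmap, ← myTopGen f φ, MonoidHom.map_closure]
    refine (Subgroup.closure_le _).2 ?_
    rintro x ⟨y, (⟨a, rfl⟩ | rfl), rfl⟩
    · have h1 : π (of a) = 1 := (QuotientGroup.eq_one_iff _).2 (h_of a)
      rw [h1]; exact one_mem _
    · exact Subgroup.mem_zpowers _
  have hidx : Γn.index = orderOf (π t) := by
    rw [← Nat.card_zpowers, hzp, Subgroup.card_top]
    rfl
  haveI : NeZero n := ⟨by omega⟩
  let ψ : HNNExtension A ⊤ f.range φ →* Multiplicative (ZMod n) :=
    HNNExtension.lift 1 (Multiplicative.ofAdd (1 : ZMod n)) (by intro a; simp)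
  have hψt : ψ t = Multiplicative.ofAdd (1 : ZMod n) := HNNExtension.lift_t _ _ _
  have hψof : ∀ a : A, ψ (of a) = 1 := fun a => HNNExtension.lift_of _ _ _ a
  have hker : Γn ≤ ψ.ker := by
    rw [hΓn]
    refine (Subgroup.closure_le _).2 ?_
    rintro x (⟨a, rfl⟩ | rfl)
    · exact hψof a
    · show ψ (t ^ n) = 1
      rw [map_pow, hψt, ← ofAdd_nsmul]
      simp
  have hsurj : Function.Surjective ψ := by
    intro z
    refine ⟨t ^ (z.toAdd.val), ?_⟩
    rw [map_pow, hψt, ← ofAdd_nsmul]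
    simp [ZMod.natCast_zmod_val]
  have hdvd : n ∣ Γn.index := by
    have h := Subgroup.index_dvd_of_le hker
    rwa [Subgroup.index_ker, MonoidHom.range_eq_top.2 hsurj, Subgroup.card_top,
      Nat.card_congr (Multiplicative.toAdd (α := ZMod n)), Nat.card_zmod] at h
  have hord : orderOf (π t) ∣ n := orderOf_dvd_of_pow_eq_one hπt
  have hindex : Γn.index = n := Nat.dvd_antisymm (hidx ▸ hord) hdvd
  -- generators
  obtain ⟨S₀, hScard, hSgen⟩ : ∃ S : Finset A, S.card = numGen A ∧
      Subgroup.closure (S : Set A) = ⊤ := by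
    have hne : {m | ∃ S : Finset A, S.card = m ∧ Subgroup.closure (S : Set A) = ⊤}.Nonempty := by
      obtain ⟨m, S, hc, hS⟩ := Group.fg_iff'.mp ‹Group.FG A›
      exact ⟨m, S, hc, hS⟩
    exact Nat.sInf_mem hne
  classical
  let eΓ : A → Γn := fun a => ⟨of a, h_of a⟩
  let τ : Γn := ⟨t ^ n, h_tn⟩
  let T : Finset Γn := insert τ (S₀.image eΓ)
  have hmap2 : Subgroup.map Γn.subtype (Subgroup.closure (T : Set Γn)) = Γn := by
    rw [MonoidHom.map_closure]
    apply le_antisymm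
    · refine (Subgroup.closure_le _).2 ?_
      rintro x ⟨y, _, rfl⟩
      exact y.2
    · refine le_trans (le_of_eq hΓn) ?_
      refine (Subgroup.closure_le _).2 ?_
      rintro x (⟨a, rfl⟩ | rfl)
      · have ha : a ∈ Subgroup.closure (S₀ : Set A) := hSgen ▸ Subgroup.mem_top a
        have h2 : of a ∈ Subgroup.map (of : A →* HNNExtension A ⊤ f.range φ)
            (Subgroup.closure (S₀ : Set A)) := ⟨a, ha, rfl⟩
        rw [MonoidHom.map_closure] at h2
        refine Subgroup.closure_mono ?_ h2
        rintro z ⟨b, hb, rfl⟩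
        exact ⟨eΓ b, Finset.mem_coe.2 (Finset.mem_insert_of_mem (Finset.mem_image_of_mem eΓ hb)),
          rfl⟩
      · exact subset_closure ⟨τ, Finset.mem_coe.2 (Finset.mem_insert_self _ _), rfl⟩
  have hTgen : Subgroup.closure (T : Set Γn) = ⊤ := by
    apply Subgroup.map_injective Γn.subtype_injective
    rw [hmap2, ← MonoidHom.range_eq_map, Subgroup.range_subtype]
  have hle : numGen Γn ≤ T.card := Nat.sInf_le ⟨T, rfl, hTgen⟩
  have hcard : T.card ≤ numGen A + 1 := by
    calc T.card ≤ (S₀.image eΓ).card + 1 := Finset.card_insert_le _ _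
      _ ≤ S₀.card + 1 := by gcongr; exact Finset.card_image_le
      _ = numGen A + 1 := by rw [hScard]
  exact ⟨hnorm, hindex, hle.trans hcard⟩
end

section
/- The action of Γ on the boundary ∂T of the coset tree of a chain (Γₙ), with the measure μ given by μ(Sh(Γₙg)) = 1/[Γ:Γₙ], is ergodic: every Γ-invariant measurable set has measure 0 or 1. -/
open Filter MeasureTheory

namespace CosetTree

variable {G : Type*} [Group G]

/-- The space of right cosets `Hg` of a subgroup `H`. -/
abbrev RCoset (H : Subgroup G) := Quotient (QuotientGroup.rightRel H)

/-- Projection of right cosets along an inclusion of subgroups. -/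
def proj {H K : Subgroup G} (h : H ≤ K) : RCoset H → RCoset K :=
  Quotient.map' id fun _ _ hab =>
    QuotientGroup.rightRel_apply.mpr (h (QuotientGroup.rightRel_apply.mp hab))

variable (C : ℕ → Subgroup G)

/-- The boundary of the coset tree of a chain of subgroups: the set of infinite rays
from the root, i.e. compatible sequences of right cosets. -/
def Boundary (h : Antitone C) : Type _ :=
  {x : (n : ℕ) → RCoset (C n) // ∀ n, proj (h (Nat.le_succ n)) (x (n + 1)) = x n}

variable {C}

/-- Right multiplication by `γ` on right cosets. -/
def cosetMul (H : Subgroup G) (γ : G) : RCoset H → RCoset H :=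
  Quotient.map' (· * γ) fun a b hab =>
    QuotientGroup.rightRel_apply.mpr (by
      have h1 := QuotientGroup.rightRel_apply.mp hab
      simpa [mul_inv_rev, mul_assoc] using h1)

lemma proj_cosetMul {H K : Subgroup G} (h : H ≤ K) (γ : G) (x : RCoset H) :
    proj h (cosetMul H γ x) = cosetMul K γ (proj h x) :=
  Quotient.inductionOn' x fun _ => rfl

/-- The action of `Γ` on the boundary of the coset tree, by right multiplication. -/
def rayMul (h : Antitone C) (γ : G) (x : Boundary C h) : Boundary C h :=
  ⟨fun n => cosetMul (C n) γ (x.1 n), fun n => by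
    rw [proj_cosetMul, x.2]⟩

/-- The shadow of the vertex `Γₙ g`: rays through that coset. -/
def shadow (h : Antitone C) (n : ℕ) (g : G) : Set (Boundary C h) :=
  {x | x.1 n = Quotient.mk'' g}

/-- The Borel σ-algebra of the boundary, generated by the shadows. -/
instance boundaryMeasurableSpace (C : ℕ → Subgroup G) (h : Antitone C) :
    MeasurableSpace (Boundary C h) :=
  MeasurableSpace.generateFrom {S | ∃ (n : ℕ) (g : G), S = shadow h n g}

end CosetTree

open CosetTree

section Aux

variable {G : Type*} [Group G] {C : ℕ → Subgroup G}

lemma proj_rfl' {H : Subgroup G} (h : H ≤ H) (x : RCoset H) : proj h x = x :=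
  Quotient.inductionOn' x fun _ => rfl

lemma proj_proj' {H K L : Subgroup G} (h1 : H ≤ K) (h2 : K ≤ L) (x : RCoset H) :
    proj h2 (proj h1 x) = proj (h1.trans h2) x :=
  Quotient.inductionOn' x fun _ => rfl

lemma boundary_proj (hm : Antitone C) (x : Boundary C hm) {n m : ℕ} (hnm : n ≤ m) :
    proj (hm hnm) (x.1 m) = x.1 n := by
  induction m, hnm using Nat.le_induction with
  | base => exact proj_rfl' _ _
  | succ m hnm ih =>
    have h2 := x.2 m
    calc proj (hm (hnm.trans (Nat.le_succ m))) (x.1 (m+1))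
        = proj (hm hnm) (proj (hm (Nat.le_succ m)) (x.1 (m+1))) := (proj_proj' _ _ _).symm
      _ = x.1 n := by rw [h2, ih]

lemma cosetMul_eq_mk_iff {H : Subgroup G} (γ g : G) (x : RCoset H) :
    cosetMul H γ x = Quotient.mk'' g ↔ x = Quotient.mk'' (g * γ⁻¹) := by
  induction x using Quotient.inductionOn' with
  | h a =>
    show Quotient.mk'' (a * γ) = Quotient.mk'' g ↔ _
    rw [Quotient.eq'', Quotient.eq'', QuotientGroup.rightRel_apply,
      QuotientGroup.rightRel_apply]
    simp [mul_inv_rev, mul_assoc]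

lemma rayMul_preimage_shadow (hm : Antitone C) (γ : G) (n : ℕ) (g : G) :
    rayMul hm γ ⁻¹' shadow hm n g = shadow hm n (g * γ⁻¹) := by
  ext x
  exact cosetMul_eq_mk_iff γ g (x.1 n)

lemma measurableSet_shadow (hm : Antitone C) (n : ℕ) (g : G) :
    MeasurableSet (shadow hm n g) :=
  MeasurableSpace.measurableSet_generateFrom ⟨n, g, rfl⟩

lemma measurable_rayMul (hm : Antitone C) (γ : G) : Measurable (rayMul hm γ) := by
  apply measurable_generateFrom
  rintro s ⟨n, g, rfl⟩
  rw [rayMul_preimage_shadow]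
  exact measurableSet_shadow hm n _

lemma shadow_inter (hm : Antitone C) {n m : ℕ} {g g' : G} (hnm : n ≤ m)
    (hne : (shadow hm n g ∩ shadow hm m g').Nonempty) :
    shadow hm n g ∩ shadow hm m g' = shadow hm m g' := by
  obtain ⟨x, hx1, hx2⟩ := hne
  apply Set.inter_eq_right.mpr
  intro y hy
  have hyx : y.1 n = x.1 n := by
    rw [← boundary_proj hm y hnm, ← boundary_proj hm x hnm]
    rw [show y.1 m = x.1 m from hy.trans hx2.symm]
  show y.1 n = _
  rw [hyx]; exact hx1

lemma isPiSystem_shadows (hm : Antitone C) :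
    IsPiSystem {S : Set (Boundary C hm) | ∃ n g, S = shadow hm n g} := by
  rintro s ⟨n, g, rfl⟩ t ⟨m, g', rfl⟩ hne
  rcases le_total n m with h | h
  · exact ⟨m, g', shadow_inter hm h hne⟩
  · rw [Set.inter_comm] at hne ⊢
    exact ⟨n, g, shadow_inter hm h hne⟩

end Aux

/-- The action of `Γ` on the boundary `∂T` of the coset tree of a
chain `(Γₙ)`, with the measure `μ` given by `μ(Sh(Γₙg)) = 1/[Γ:Γₙ]`, is ergodic:
every `Γ`-invariant measurable set has measure `0` or `1`. -/

theorem boundary_action_ergodic {G : Type*} [Group G]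
    (C : ℕ → Subgroup G) (hC0 : C 0 = ⊤) (hmono : Antitone C)
    (hfin : ∀ n, (C n).FiniteIndex)
    (μ : Measure (Boundary C hmono)) [IsProbabilityMeasure μ]
    (hμ : ∀ (n : ℕ) (g : G), μ (shadow hmono n g) = ((C n).index : ENNReal)⁻¹)
    (A : Set (Boundary C hmono)) (hA : MeasurableSet A)
    (hinv : ∀ γ : G, rayMul hmono γ ⁻¹' A = A) :
    μ A = 0 ∨ μ A = 1 := by
  classical
  -- μ is invariant under rayMul
  have hmap : ∀ γ : G, μ.map (rayMul hmono γ) = μ := by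
    intro γ
    haveI : IsProbabilityMeasure (μ.map (rayMul hmono γ)) :=
      Measure.isProbabilityMeasure_map (measurable_rayMul hmono γ).aemeasurable
    refine ext_of_generate_finite _ rfl (isPiSystem_shadows hmono) ?_ (by simp)
    rintro s ⟨n, g, rfl⟩
    rw [Measure.map_apply (measurable_rayMul hmono γ) (measurableSet_shadow hmono n g),
      rayMul_preimage_shadow, hμ, hμ]
  -- independence with shadows
  have hkey : ∀ (n : ℕ) (g : G),
      μ (A ∩ shadow hmono n g) = μ A * ((C n).index : ENNReal)⁻¹ := by
    intro n g
    have hsame : ∀ g', μ (A ∩ shadow hmono n g') = μ (A ∩ shadow hmono n g) := by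
      intro g'
      have hpre : rayMul hmono (g⁻¹ * g') ⁻¹' (A ∩ shadow hmono n g')
          = A ∩ shadow hmono n g := by
        rw [Set.preimage_inter, hinv, rayMul_preimage_shadow]
        congr 2
        group
      calc μ (A ∩ shadow hmono n g')
          = μ.map (rayMul hmono (g⁻¹ * g')) (A ∩ shadow hmono n g') := by rw [hmap]
        _ = μ (rayMul hmono (g⁻¹ * g') ⁻¹' (A ∩ shadow hmono n g')) :=
            Measure.map_apply (measurable_rayMul hmono _)
              (hA.inter (measurableSet_shadow hmono n g'))
        _ = μ (A ∩ shadow hmono n g) := by rw [hpre]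
    haveI := hfin n
    haveI : Finite (RCoset (C n)) :=
      Finite.of_equiv _ (QuotientGroup.quotientRightRelEquivQuotientLeftRel (C n)).symm
    haveI : Fintype (RCoset (C n)) := Fintype.ofFinite _
    have houte : ∀ c : RCoset (C n), (Quotient.mk'' (Quotient.out c) : RCoset (C n)) = c :=
      fun c => Quotient.out_eq c
    have hunion : A = ⋃ c : RCoset (C n), A ∩ shadow hmono n (Quotient.out c) := by
      ext x
      simp only [Set.mem_iUnion, Set.mem_inter_iff]
      exact ⟨fun hx => ⟨x.1 n, hx, (houte _).symm⟩, fun ⟨c, hx, _⟩ => hx⟩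
    have hdisj : Pairwise (Function.onFun Disjoint
        fun c : RCoset (C n) => A ∩ shadow hmono n (Quotient.out c)) := by
      intro c c' hcc
      refine Set.disjoint_left.mpr ?_
      rintro x ⟨-, hx⟩ ⟨-, hx'⟩
      exact hcc (by rw [← houte c, ← houte c', ← hx, ← hx'])
    have hsum : μ A = ∑' c : RCoset (C n), μ (A ∩ shadow hmono n (Quotient.out c)) := by
      conv_lhs => rw [hunion]
      exact measure_iUnion hdisj fun c => hA.inter (measurableSet_shadow hmono n _)
    have hcard : (Fintype.card (RCoset (C n)) : ENNReal) = ((C n).index : ENNReal) := by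
      norm_cast
      rw [← Nat.card_eq_fintype_card,
        Nat.card_congr (QuotientGroup.quotientRightRelEquivQuotientLeftRel (C n))]
      rfl
    have hsum2 : μ A = ((C n).index : ENNReal) * μ (A ∩ shadow hmono n g) := by
      rw [hsum, tsum_fintype]
      calc ∑ c : RCoset (C n), μ (A ∩ shadow hmono n (Quotient.out c))
          = ∑ _c : RCoset (C n), μ (A ∩ shadow hmono n g) := by
            exact Finset.sum_congr rfl fun c _ => hsame _
        _ = (Fintype.card (RCoset (C n)) : ENNReal) * μ (A ∩ shadow hmono n g) := by
            rw [Finset.sum_const, Finset.card_univ, nsmul_eq_mul]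
        _ = ((C n).index : ENNReal) * μ (A ∩ shadow hmono n g) := by rw [hcard]
    have hidx0 : ((C n).index : ENNReal) ≠ 0 := by
      exact_mod_cast Nat.cast_ne_zero.mpr (Subgroup.FiniteIndex.index_ne_zero)
    have hidxtop : ((C n).index : ENNReal) ≠ ⊤ := ENNReal.natCast_ne_top _
    calc μ (A ∩ shadow hmono n g)
        = ((C n).index : ENNReal)⁻¹ * (((C n).index : ENNReal) * μ (A ∩ shadow hmono n g)) := by
          rw [← mul_assoc, ENNReal.inv_mul_cancel hidx0 hidxtop, one_mul]
      _ = ((C n).index : ENNReal)⁻¹ * μ A := by rw [← hsum2]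
      _ = μ A * ((C n).index : ENNReal)⁻¹ := mul_comm _ _
  -- conclude via uniqueness of measures on the generating π-system
  haveI : IsFiniteMeasure ((μ A) • μ) := ⟨by
    rw [Measure.smul_apply, smul_eq_mul, measure_univ, mul_one]
    exact measure_lt_top μ A⟩
  have hfinal : μ.restrict A = (μ A) • μ := by
    refine ext_of_generate_finite _ rfl (isPiSystem_shadows hmono) ?_ ?_
    · rintro s ⟨n, g, rfl⟩
      rw [Measure.restrict_apply (measurableSet_shadow hmono n g), Set.inter_comm, hkey,
        Measure.smul_apply, smul_eq_mul, hμ]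
    · rw [Measure.restrict_apply_univ, Measure.smul_apply, smul_eq_mul, measure_univ, mul_one]
  have hAA : μ A = μ A * μ A := by
    have h := congrArg (fun ν : Measure (Boundary C hmono) => ν A) hfinal
    simpa [Measure.restrict_apply hA, Set.inter_self, Measure.smul_apply, smul_eq_mul] using h
  rcases eq_or_ne (μ A) 0 with h0 | h0
  · exact Or.inl h0
  · right
    have h1 : μ A * 1 = μ A * μ A := by rw [mul_one]; exact hAA
    exact ((ENNReal.mul_right_inj h0 (measure_ne_top μ A)).mp h1).symm
end

section
/- Let Γ = (Z/2Z) wr Z be the lamplighter group, and for each n let Γₙ be the kernel of the composite surjection Γ → (Z/2Z) wr (Z/2ⁿZ) → Z/2ⁿZ. Then Γₙ is a normal subgroup of Γ of index 2ⁿ, and d(Γₙ) ≥ 2ⁿ; consequently RG(Γ, (Γₙ)) = lim (d(Γₙ)−1)/[Γ:Γₙ] ≥ 1. -/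
open Filter

/-- The lamplighter group `(ℤ/2ℤ) wr ℤ = (⊕_ℤ ℤ/2ℤ) ⋊ ℤ`, where `φ` is the shift
action of `ℤ` on the base group `⊕_ℤ ℤ/2ℤ`. -/
abbrev Lamplighter (φ : Multiplicative ℤ →* MulAut (Multiplicative (ℤ →₀ ZMod 2))) :=
  SemidirectProduct (Multiplicative (ℤ →₀ ZMod 2)) (Multiplicative ℤ) φ

section Aux

variable (φ : Multiplicative ℤ →* MulAut (Multiplicative (ℤ →₀ ZMod 2)))

/-- Abbreviation for the shift hypothesis. -/
def ShiftHyp : Prop :=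
  ∀ (a : Multiplicative ℤ) (x : Multiplicative (ℤ →₀ ZMod 2)) (i : ℤ),
      Multiplicative.toAdd (φ a x) i =
        Multiplicative.toAdd x (i - Multiplicative.toAdd a)

theorem aux_shift (hφ : ShiftHyp φ) (a : Multiplicative ℤ)
    (x : Multiplicative (ℤ →₀ ZMod 2)) :
    Multiplicative.toAdd (φ a x) =
      Finsupp.mapDomain (· + Multiplicative.toAdd a) (Multiplicative.toAdd x) := by
  ext i
  rw [hφ]
  have := Finsupp.mapDomain_apply (f := fun j => j + Multiplicative.toAdd a)
    (add_left_injective _) (Multiplicative.toAdd x) (i - Multiplicative.toAdd a)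
  simpa using this.symm

theorem lamplighter_fg (hφ : ShiftHyp φ) : Group.FG (Lamplighter φ) := by
  rw [Group.fg_iff]
  set g1 : Lamplighter φ :=
    SemidirectProduct.inl (Multiplicative.ofAdd (Finsupp.single 0 1)) with hg1def
  set g2 : Lamplighter φ := SemidirectProduct.inr (Multiplicative.ofAdd 1) with hg2def
  refine ⟨{g1, g2}, ?_, Set.toFinite _⟩
  rw [Subgroup.eq_top_iff']
  intro x
  have hg2 : g2 ∈ Subgroup.closure {g1, g2} :=
    Subgroup.subset_closure (by simp)
  have hg1 : g1 ∈ Subgroup.closure {g1, g2} :=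
    Subgroup.subset_closure (by simp)
  have hinr : ∀ a : Multiplicative ℤ,
      (SemidirectProduct.inr a : Lamplighter φ) ∈ Subgroup.closure {g1, g2} := by
    intro a
    have h1 : (SemidirectProduct.inr a : Lamplighter φ) = g2 ^ (Multiplicative.toAdd a) := by
      rw [hg2def, ← map_zpow, ← ofAdd_zsmul]
      simp
    rw [h1]
    exact zpow_mem hg2 _
  have hsingle : ∀ i : ℤ,
      (SemidirectProduct.inl (Multiplicative.ofAdd (Finsupp.single i 1)) : Lamplighter φ)
        ∈ Subgroup.closure {g1, g2} := by
    intro i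
    have hphi : φ (Multiplicative.ofAdd i) (Multiplicative.ofAdd (Finsupp.single 0 1))
        = Multiplicative.ofAdd (Finsupp.single i 1) := by
      apply Multiplicative.toAdd.injective
      rw [aux_shift φ hφ, toAdd_ofAdd, toAdd_ofAdd, Finsupp.mapDomain_single, zero_add]
      rfl
    have h2 := SemidirectProduct.inl_aut (φ := φ) (Multiplicative.ofAdd i)
      (Multiplicative.ofAdd (Finsupp.single 0 1))
    rw [hphi] at h2
    rw [h2]
    exact mul_mem (mul_mem (hinr _) hg1) (hinr _)
  have hinl : ∀ f : ℤ →₀ ZMod 2,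
      (SemidirectProduct.inl (Multiplicative.ofAdd f) : Lamplighter φ)
        ∈ Subgroup.closure {g1, g2} := by
    intro f
    induction f using Finsupp.induction with
    | zero => simp only [ofAdd_zero, map_one]; exact one_mem _
    | single_add a b f _ hb ih =>
      have hall : ∀ c : ZMod 2, c ≠ 0 → c = 1 := by decide
      have hb1 : b = 1 := hall b hb
      rw [hb1, ofAdd_add, map_mul]
      exact mul_mem (hsingle a) ih
  rw [← SemidirectProduct.inl_left_mul_inr_right x]
  exact mul_mem (hinl _) (hinr _)

/-- The projection `Γ → ℤ/2ⁿℤ`. -/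
noncomputable abbrev rhoN (n : ℕ) : Lamplighter φ →* Multiplicative (ZMod (2 ^ n)) :=
  (AddMonoidHom.toMultiplicative (Int.castAddHom (ZMod (2 ^ n)))).comp
    SemidirectProduct.rightHom

theorem mem_ker_rho (n : ℕ) (x : Lamplighter φ) :
    x ∈ MonoidHom.ker (rhoN φ n) ↔
      ((Multiplicative.toAdd x.right : ℤ) : ZMod (2 ^ n)) = 0 := by
  have h : (rhoN φ n) x =
      Multiplicative.ofAdd ((Multiplicative.toAdd x.right : ℤ) : ZMod (2 ^ n)) := rfl
  rw [MonoidHom.mem_ker, h, ofAdd_eq_one]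

theorem rho_surjective (n : ℕ) : Function.Surjective (rhoN φ n) := by
  intro t
  refine ⟨SemidirectProduct.inr (Multiplicative.ofAdd ((Multiplicative.toAdd t).cast)), ?_⟩
  have h : (rhoN φ n) (SemidirectProduct.inr (Multiplicative.ofAdd ((Multiplicative.toAdd t).cast)))
      = Multiplicative.ofAdd ((((Multiplicative.toAdd t).cast : ℤ)) : ZMod (2 ^ n)) := rfl
  rw [h, ZMod.intCast_zmod_cast, ofAdd_toAdd]

theorem mapDomain_cast_shift (hφ : ShiftHyp φ) (n : ℕ) (a : Multiplicative ℤ)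
    (ha : ((Multiplicative.toAdd a : ℤ) : ZMod (2 ^ n)) = 0)
    (g : Multiplicative (ℤ →₀ ZMod 2)) :
    Finsupp.mapDomain (Int.cast : ℤ → ZMod (2 ^ n)) (Multiplicative.toAdd (φ a g)) =
      Finsupp.mapDomain (Int.cast : ℤ → ZMod (2 ^ n)) (Multiplicative.toAdd g) := by
  rw [aux_shift φ hφ, ← Finsupp.mapDomain_comp]
  congr 1
  funext j
  simp [ha]

/-- The homomorphism from `Γₙ` to the elementary abelian group `(ℤ/2ℤ)^(2ⁿ)`. -/
noncomputable def Fhom (hφ : ShiftHyp φ) (n : ℕ) :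
    MonoidHom.ker (rhoN φ n) →* Multiplicative (ZMod (2 ^ n) →₀ ZMod 2) where
  toFun x := Multiplicative.ofAdd
    (Finsupp.mapDomain (Int.cast : ℤ → ZMod (2 ^ n)) (Multiplicative.toAdd x.1.left))
  map_one' := by simp
  map_mul' x y := by
    have hx : ((Multiplicative.toAdd (x.1.right) : ℤ) : ZMod (2 ^ n)) = 0 :=
      (mem_ker_rho φ n x.1).mp x.2
    have hleft : ((x * y : MonoidHom.ker (rhoN φ n)) : Lamplighter φ).left
        = x.1.left * φ x.1.right y.1.left := rfl
    simp only [hleft, toAdd_mul, Finsupp.mapDomain_add,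
      mapDomain_cast_shift φ hφ n _ hx, ofAdd_add]

theorem Fhom_surjective (hφ : ShiftHyp φ) (n : ℕ) :
    Function.Surjective (Fhom φ hφ n) := by
  intro t
  haveI : NeZero (2 ^ n) := ⟨pow_ne_zero n two_ne_zero⟩
  refine ⟨⟨SemidirectProduct.inl (Multiplicative.ofAdd
    (Finsupp.mapDomain (fun r : ZMod (2 ^ n) => (r.val : ℤ)) (Multiplicative.toAdd t))),
    ?_⟩, ?_⟩
  · rw [mem_ker_rho]
    simp
  · apply Multiplicative.ofAdd.injective.comp Multiplicative.toAdd.injective |>.eq_iff.mp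
    show Multiplicative.ofAdd _ = _
    rw [Fhom]
    simp only [MonoidHom.coe_mk, OneHom.coe_mk, SemidirectProduct.left_inl, toAdd_ofAdd]
    rw [← Finsupp.mapDomain_comp]
    have hcomp : (Int.cast : ℤ → ZMod (2 ^ n)) ∘ (fun r : ZMod (2 ^ n) => (r.val : ℤ)) = id := by
      funext r
      simp [ZMod.natCast_val, ZMod.intCast_cast, ZMod.intCast_zmod_cast]
    rw [hcomp, Finsupp.mapDomain_id]
    simp

theorem card_bound (hφ : ShiftHyp φ) (n : ℕ) (S : Finset (MonoidHom.ker (rhoN φ n)))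
    (hS : Subgroup.closure (S : Set (MonoidHom.ker (rhoN φ n))) = ⊤) : 2 ^ n ≤ S.card := by
  classical
  haveI : NeZero (2 ^ n) := ⟨pow_ne_zero n two_ne_zero⟩
  set F := Fhom φ hφ n with hF
  set s : Finset (ZMod (2 ^ n) →₀ ZMod 2) :=
    S.image (fun x => Multiplicative.toAdd (F x)) with hs
  have hspan : Submodule.span (ZMod 2) (s : Set (ZMod (2 ^ n) →₀ ZMod 2)) = ⊤ := by
    rw [Submodule.eq_top_iff']
    intro v
    have h1 : Multiplicative.ofAdd v ∈ Subgroup.closure (F '' S) := by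
      rw [← MonoidHom.map_closure, hS, ← MonoidHom.range_eq_map,
        MonoidHom.range_eq_top.mpr (Fhom_surjective φ hφ n)]
      trivial
    have h2 : ∀ (x : Multiplicative (ZMod (2 ^ n) →₀ ZMod 2))
        (_ : x ∈ Subgroup.closure (F '' S)),
        Multiplicative.toAdd x ∈ Submodule.span (ZMod 2) (s : Set (ZMod (2 ^ n) →₀ ZMod 2)) := by
      intro x hx
      refine Subgroup.closure_induction ?_ ?_ ?_ ?_ hx
      · rintro y ⟨z, hz, rfl⟩
        exact Submodule.subset_span (by simp only [hs, Finset.coe_image]; exact ⟨z, hz, rfl⟩)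
      · simpa using Submodule.zero_mem _
      · intro a b _ _ ha hb
        simpa using Submodule.add_mem _ ha hb
      · intro a _ ha
        simpa using Submodule.neg_mem _ ha
    simpa using h2 _ h1
  have hrank : (2 : ℕ) ^ n ≤ s.card := by
    have h3 : Module.finrank (ZMod 2) (ZMod (2 ^ n) →₀ ZMod 2) ≤ s.card := by
      rw [← finrank_top (ZMod 2) (ZMod (2 ^ n) →₀ ZMod 2), ← hspan]
      exact finrank_span_finset_le_card s
    rwa [Module.finrank_finsupp_self, ZMod.card] at h3
  exact hrank.trans (Finset.card_image_le)

end Aux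

/-- Let `Γ = (ℤ/2ℤ) wr ℤ` be the lamplighter group and `Γₙ` the
kernel of the composite surjection `Γ → (ℤ/2ℤ) wr (ℤ/2ⁿℤ) → ℤ/2ⁿℤ` (which is reduction
mod `2ⁿ` of the projection to `ℤ`).  Then `Γₙ` is normal of index `2ⁿ`,
`d(Γₙ) ≥ 2ⁿ`, and consequently `RG(Γ, (Γₙ)) = lim (d(Γₙ)−1)/[Γ:Γₙ] ≥ 1`. -/
theorem lamplighter_chain_rank_gradient_ge_one
    (φ : Multiplicative ℤ →* MulAut (Multiplicative (ℤ →₀ ZMod 2)))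
    (hφ : ∀ (a : Multiplicative ℤ) (x : Multiplicative (ℤ →₀ ZMod 2)) (i : ℤ),
      Multiplicative.toAdd (φ a x) i =
        Multiplicative.toAdd x (i - Multiplicative.toAdd a))
    (C : ℕ → Subgroup (Lamplighter φ))
    (hC : ∀ n : ℕ, C n = MonoidHom.ker
      ((AddMonoidHom.toMultiplicative (Int.castAddHom (ZMod (2 ^ n)))).comp
        SemidirectProduct.rightHom)) :
    (∀ n : ℕ, (C n).Normal ∧ (C n).index = 2 ^ n ∧ 2 ^ n ≤ numGen (C n)) ∧
    (∀ L : ℝ, Tendsto (fun n => ((numGen (C n) : ℝ) - 1) / ((C n).index : ℝ))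
        atTop (nhds L) → 1 ≤ L) := by
  have hφ' : ShiftHyp φ := hφ
  haveI hFG : Group.FG (Lamplighter φ) := lamplighter_fg φ hφ'
  have hmain : ∀ n : ℕ, (C n).Normal ∧ (C n).index = 2 ^ n ∧ 2 ^ n ≤ numGen (C n) := by
    intro n
    have hker : C n = MonoidHom.ker (rhoN φ n) := hC n
    haveI : NeZero (2 ^ n) := ⟨pow_ne_zero n two_ne_zero⟩
    have hidx : (C n).index = 2 ^ n := by
      rw [hker, Subgroup.index_ker, MonoidHom.range_eq_top.mpr (rho_surjective φ n),
        Subgroup.card_top]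
      rw [Nat.card_congr (Multiplicative.toAdd (α := ZMod (2 ^ n))), Nat.card_zmod]
    refine ⟨hker ▸ MonoidHom.normal_ker _, hidx, ?_⟩
    haveI : (C n).FiniteIndex := ⟨by rw [hidx]; exact pow_ne_zero n two_ne_zero⟩
    haveI : Group.FG (C n) := Subgroup.fg_of_index_ne_zero (C n)
    obtain ⟨m, S, hcard, hcl⟩ := Group.fg_iff'.mp this
    have hne : {k | ∃ S : Finset (C n), S.card = k ∧
        Subgroup.closure (S : Set (C n)) = ⊤}.Nonempty := ⟨m, S, hcard, hcl⟩
    obtain ⟨T, hTcard, hTcl⟩ := Nat.sInf_mem hne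
    rw [numGen, ← hTcard]
    revert T
    rw [hker]
    intro T hTcard hTcl
    exact card_bound φ hφ' n T hTcl
  refine ⟨hmain, ?_⟩
  intro L hL
  have h1 : Tendsto (fun n : ℕ => 1 - (1 / 2 : ℝ) ^ n) atTop (nhds 1) := by
    have := tendsto_pow_atTop_nhds_zero_of_lt_one
      (by norm_num : (0:ℝ) ≤ 1 / 2) (by norm_num : (1/2 : ℝ) < 1)
    have h2 := (tendsto_const_nhds (x := (1:ℝ)) (f := atTop)).sub this
    simpa using h2
  refine le_of_tendsto_of_tendsto' h1 hL ?_
  intro n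
  obtain ⟨_, hidx, hgen⟩ := hmain n
  rw [hidx]
  have hpow : (0:ℝ) < 2 ^ n := by positivity
  have hgenR : (2:ℝ) ^ n ≤ (numGen (C n) : ℝ) := by
    exact_mod_cast hgen
  have hcast : (((2:ℕ) ^ n : ℕ) : ℝ) = 2 ^ n := by push_cast; ring
  rw [hcast, le_div_iff₀ hpow]
  have hmul : ((1/2:ℝ)) ^ n * 2 ^ n = 1 := by rw [← mul_pow]; norm_num
  have hexp : (1 - (1/2:ℝ) ^ n) * 2 ^ n = 2 ^ n - 1 := by rw [sub_mul, one_mul, hmul]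
  rw [hexp]
  linarith
end
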